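/- Let F^1,...,F^N be n×n circulant matrices, h : R → R an arbitrary function applied entrywise, and for x in R^n define the Gram matrix G^x with entries G^x_{ij} = ⟨h(F^i x), h(F^j x)⟩. Then for the cyclic shift Cs(x) of x, one has G^{Cs(x)} = G^x. Consequently G^x = G^{Cs^m(x)} for every m. -/
import Mathlib


open Matrix

/-- The cyclic shift sending `(x₁, …, xₙ)` to `(xₙ, x₁, …, xₙ₋₁)`. -/
def cycShift {n : ℕ} [NeZero n] (x : Fin n → ℝ) : Fin n → ℝ := fun i => x (i - 1)

/-- The circulant matrix whose first row is `f` and whose `k`-th row is the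
`k`-fold cyclic shift of `f`. -/
def circMat {n : ℕ} [NeZero n] (f : Fin n → ℝ) : Matrix (Fin n) (Fin n) ℝ :=
  fun k j => f (j - k)

lemma mulVec_cycShift {n : ℕ} [NeZero n] (g : Fin n → ℝ) (x : Fin n → ℝ) (p : Fin n) :
    (circMat g).mulVec (cycShift x) p = (circMat g).mulVec x (p - 1) := by
  simp only [mulVec, dotProduct, circMat, cycShift]
  exact Fintype.sum_equiv (Equiv.subRight (1 : Fin n)) _ _ (by
    intro j
    simp [Equiv.subRight, sub_sub_eq_add_sub, sub_sub])

lemma key {n N : ℕ} [NeZero n] (f : Fin N → Fin n → ℝ) (h : ℝ → ℝ)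
    (G : (Fin n → ℝ) → Fin N → Fin N → ℝ)
    (hG : ∀ x i j,
      G x i j = (fun p => h ((circMat (f i)).mulVec x p)) ⬝ᵥ
        (fun p => h ((circMat (f j)).mulVec x p))) (x : Fin n → ℝ) :
    G (cycShift x) = G x := by
  funext i j
  rw [hG, hG]
  simp only [dotProduct, mulVec_cycShift]
  exact Fintype.sum_equiv (Equiv.subRight (1 : Fin n)) _ _ (fun p => rfl)

theorem stmt5 (n N : ℕ) [NeZero n] (f : Fin N → Fin n → ℝ) (h : ℝ → ℝ)
    (G : (Fin n → ℝ) → Fin N → Fin N → ℝ)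
    (hG : ∀ x i j,
      G x i j = (fun p => h ((circMat (f i)).mulVec x p)) ⬝ᵥ
        (fun p => h ((circMat (f j)).mulVec x p))) (x : Fin n → ℝ) :
    G (cycShift x) = G x ∧ ∀ m : ℕ, G (cycShift^[m] x) = G x := by
  refine ⟨key f h G hG x, ?_⟩
  intro m
  induction m with
  | zero => rfl
  | succ k ih =>
    rw [Function.iterate_succ_apply', key f h G hG, ih]
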